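/- arXiv:1909.00942 — 6 statements merged into one kernel-verified Lean document; each statement's English description precedes it below -/
import Mathlib

section
/- Let d ≥ 1, let ρ : ℝ → Matrix (Fin d) (Fin d) ℂ be a family of density matrices with entries differentiable at θ₀ and derivative ρ', and let D be a Hermitian matrix satisfying ρ' = (ρ(θ₀)·D + D·ρ(θ₀))/2. Let (φ_x)_{x ∈ Fin d} be an orthonormal eigenbasis of D with real eigenvalues (λ_x), and let Π x := φ_x φ_x† be the corresponding rank-one projections. With p x θ := Re Tr(ρ θ · Π x), one has (d/dθ p x)(θ₀) = λ_x · p x θ₀ for every x, and consequently the classical Fisher information of this measurement equals the quantum Fisher information: Σ_{x : p x θ₀ > 0} ( (d/dθ p x)(θ₀) )² / p x θ₀ = Re Tr( ρ(θ₀) · D · D ). -/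
open Matrix
open scoped ComplexOrder

/-! Since `D Π_x = Π_x D = λ_x Π_x` (the second because `D` is Hermitian and `λ_x` real), the SLD
equation gives `p_x' = Re Tr(ρ' Π_x) = λ_x p_x`. Completeness `∑ Π_x = 1` of the orthonormal
basis gives `Tr(ρ D²) = ∑ λ_x² Tr(ρ Π_x)`, and `∑ (p_x')² / p_x = ∑ λ_x² p_x` once one notes that
outcomes with `p_x = 0` contribute to neither side, `ρ` being positive semidefinite. -/

namespace Matrix

variable {n : Type*} [Fintype n]

theorem trace_mul_vecMulVec_star {α : Type*} [CommSemiring α] [StarRing α]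
    (A : Matrix n n α) (v : n → α) :
    (A * vecMulVec v (star v)).trace = star v ⬝ᵥ (A *ᵥ v) := by
  rw [mul_vecMulVec, trace_vecMulVec, dotProduct_comm]

theorem PosSemidef.re_trace_mul_vecMulVec_star_nonneg {A : Matrix n n ℂ} (hA : A.PosSemidef)
    (v : n → ℂ) : 0 ≤ (A * vecMulVec v (star v)).trace.re := by
  rw [trace_mul_vecMulVec_star]
  exact (Complex.nonneg_iff.mp (hA.dotProduct_mulVec_nonneg v)).1

theorem mul_vecMulVec_of_mulVec_eq_smul {α : Type*} [Semiring α] {D : Matrix n n α}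
    {v : n → α} {c : α} (h : D *ᵥ v = c • v) (w : n → α) :
    D * vecMulVec v w = c • vecMulVec v w := by
  rw [mul_vecMulVec, h, smul_vecMulVec]

theorem vecMulVec_star_mul_of_mulVec_eq_smul {D : Matrix n n ℂ} (hD : D.IsHermitian)
    {v : n → ℂ} {c : ℝ} (h : D *ᵥ v = (c : ℂ) • v) :
    vecMulVec v (star v) * D = (c : ℂ) • vecMulVec v (star v) := by
  have hrow : star v ᵥ* D = (c : ℂ) • star v := by
    rw [← hD.eq, ← star_mulVec, h, star_smul, Complex.star_def, Complex.conj_ofReal]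
  rw [vecMulVec_mul, hrow, vecMulVec_smul]

theorem sum_vecMulVec_star_eq_one {α : Type*} [CommRing α] [StarRing α] [DecidableEq n]
    (φ : n → n → α) (horth : ∀ x y, star (φ x) ⬝ᵥ φ y = if x = y then 1 else 0) :
    ∑ x, vecMulVec (φ x) (star (φ x)) = 1 := by
  -- a square matrix with orthonormal columns also has orthonormal rows
  have hU : (of φ)ᵀᴴ * (of φ)ᵀ = 1 := by
    ext x y
    simpa [mul_apply, dotProduct, one_apply] using horth x y
  have hU' : (of φ)ᵀ * (of φ)ᵀᴴ = 1 := mul_eq_one_comm.mp hU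
  ext i j
  simpa [mul_apply, sum_apply, vecMulVec_apply] using congr($hU' i j)

theorem trace_jordan_mul_of_eigen {K : Type*} [Field K] [NeZero (2 : K)]
    {A D P : Matrix n n K} {c : K} (hDP : D * P = c • P) (hPD : P * D = c • P) :
    (((1 / 2 : K) • (A * D + D * A)) * P).trace = c * (A * P).trace := by
  have hADP : (A * D * P).trace = c * (A * P).trace := by
    rw [Matrix.mul_assoc, hDP, mul_smul_comm, trace_smul, smul_eq_mul]
  have hDAP : (D * A * P).trace = c * (A * P).trace := by
    rw [trace_mul_cycle, hPD, smul_mul_assoc, trace_smul, trace_mul_comm, smul_eq_mul]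
  rw [smul_mul_assoc, trace_smul, add_mul, trace_add, hADP, hDAP, smul_eq_mul]
  field_simp
  ring

theorem trace_mul_mul_eq_sum_sq_mul {ι α : Type*} [Fintype ι] [CommRing α] [DecidableEq n]
    {D : Matrix n n α} {P : ι → Matrix n n α} {c : ι → α} (hP : ∑ x, P x = 1)
    (hDP : ∀ x, D * P x = c x • P x) (A : Matrix n n α) :
    (A * D * D).trace = ∑ x, c x ^ 2 * (A * P x).trace := by
  have hADD : A * D * D = ∑ x, c x ^ 2 • (A * P x) := by
    rw [← Matrix.mul_one (A * D * D), ← hP, Finset.mul_sum]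
    refine Finset.sum_congr rfl fun x _ => ?_
    rw [Matrix.mul_assoc, Matrix.mul_assoc, hDP, mul_smul_comm, hDP, smul_smul, mul_smul_comm, sq]
  simp [hADD, trace_sum, trace_smul]

end Matrix

theorem hasDerivAt_trace_mul {𝕜 𝔸 n : Type*} [NontriviallyNormedField 𝕜] [NormedRing 𝔸]
    [NormedAlgebra 𝕜 𝔸] [Fintype n] {ρ : 𝕜 → Matrix n n 𝔸} {ρ' : Matrix n n 𝔸} {θ₀ : 𝕜}
    (hρ : ∀ i j, HasDerivAt (fun θ => ρ θ i j) (ρ' i j) θ₀) (M : Matrix n n 𝔸) :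
    HasDerivAt (fun θ => (ρ θ * M).trace) (ρ' * M).trace θ₀ := by
  simp only [trace, diag, mul_apply]
  exact HasDerivAt.fun_sum fun i _ => HasDerivAt.fun_sum fun j _ => (hρ i j).mul_const (M j i)

theorem sum_filter_pos_sq_mul_div_eq {ι : Type*} [Fintype ι] {p : ι → ℝ} (hp : ∀ x, 0 ≤ p x)
    (c : ι → ℝ) :
    ∑ x ∈ Finset.univ.filter (fun x => 0 < p x), (c x * p x) ^ 2 / p x = ∑ x, c x ^ 2 * p x := by
  rw [Finset.sum_filter]
  refine Finset.sum_congr rfl fun x _ => ?_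
  split_ifs with hx
  · field_simp
  · simp [le_antisymm (not_lt.mp hx) (hp x)]

theorem sld_eigenbasis_measurement_saturates_qcrb_general
    {d : ℕ} (θ₀ : ℝ)
    (ρ : ℝ → Matrix (Fin d) (Fin d) ℂ)
    (hρ : ∀ θ, (ρ θ).PosSemidef ∧ (ρ θ).trace = 1)
    (ρ' : Matrix (Fin d) (Fin d) ℂ)
    (hderiv : ∀ i j, HasDerivAt (fun θ => ρ θ i j) (ρ' i j) θ₀)
    (D : Matrix (Fin d) (Fin d) ℂ) (hD : D.IsHermitian)
    (hSLD : ρ' = (1 / 2 : ℂ) • (ρ θ₀ * D + D * ρ θ₀))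
    (φ : Fin d → Fin d → ℂ) (lam : Fin d → ℝ)
    (horth : ∀ x y, star (φ x) ⬝ᵥ φ y = if x = y then 1 else 0)
    (heig : ∀ x, D *ᵥ φ x = (lam x : ℂ) • φ x) :
    (∀ x, deriv (fun θ => ((ρ θ * vecMulVec (φ x) (star (φ x))).trace).re) θ₀
        = lam x * ((ρ θ₀ * vecMulVec (φ x) (star (φ x))).trace).re) ∧
    ∑ x ∈ Finset.univ.filter
        (fun x => 0 < ((ρ θ₀ * vecMulVec (φ x) (star (φ x))).trace).re),
        (deriv (fun θ => ((ρ θ * vecMulVec (φ x) (star (φ x))).trace).re) θ₀) ^ 2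
          / ((ρ θ₀ * vecMulVec (φ x) (star (φ x))).trace).re
      = ((ρ θ₀ * D * D).trace).re := by
  have hDP x := mul_vecMulVec_of_mulVec_eq_smul (heig x) (star (φ x))
  have hPD x := vecMulVec_star_mul_of_mulVec_eq_smul hD (heig x)
  have hp_deriv x : HasDerivAt (fun θ => ((ρ θ * vecMulVec (φ x) (star (φ x))).trace).re)
      (lam x * ((ρ θ₀ * vecMulVec (φ x) (star (φ x))).trace).re) θ₀ := by
    have h := Complex.reCLM.hasFDerivAt.comp_hasDerivAt θ₀
      (hasDerivAt_trace_mul hderiv (vecMulVec (φ x) (star (φ x))))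
    rw [hSLD, trace_jordan_mul_of_eigen (hDP x) (hPD x)] at h
    simpa [Function.comp_def] using h
  have hp_nonneg x := (hρ θ₀).1.re_trace_mul_vecMulVec_star_nonneg (φ x)
  refine ⟨fun x => (hp_deriv x).deriv, ?_⟩
  simp only [fun x => (hp_deriv x).deriv]
  rw [sum_filter_pos_sq_mul_div_eq hp_nonneg,
    trace_mul_mul_eq_sum_sq_mul (sum_vecMulVec_star_eq_one φ horth) hDP, Complex.re_sum]
  simp [← Complex.ofReal_pow]

/-- Projective measurement in the eigenbasis of the symmetric logarithmic
derivative saturates the quantum Cramér–Rao bound: with `Π_x = φ_x φ_x†` the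
rank-one projections onto an orthonormal eigenbasis of `D`, the outcome
probabilities satisfy `p'_x(θ₀) = λ_x p_x(θ₀)` and the classical Fisher
information equals the quantum Fisher information `Tr(ρ(θ₀) D²)`. -/
theorem sld_eigenbasis_measurement_saturates_qcrb
    {d : ℕ} (hd : 1 ≤ d) (θ₀ : ℝ)
    (ρ : ℝ → Matrix (Fin d) (Fin d) ℂ)
    (hρ : ∀ θ, (ρ θ).PosSemidef ∧ (ρ θ).trace = 1)
    (ρ' : Matrix (Fin d) (Fin d) ℂ)
    (hderiv : ∀ i j, HasDerivAt (fun θ => ρ θ i j) (ρ' i j) θ₀)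
    (D : Matrix (Fin d) (Fin d) ℂ) (hD : D.IsHermitian)
    (hSLD : ρ' = (1 / 2 : ℂ) • (ρ θ₀ * D + D * ρ θ₀))
    (φ : Fin d → Fin d → ℂ) (lam : Fin d → ℝ)
    (horth : ∀ x y, star (φ x) ⬝ᵥ φ y = if x = y then 1 else 0)
    (heig : ∀ x, D *ᵥ φ x = (lam x : ℂ) • φ x) :
    (∀ x, deriv (fun θ => ((ρ θ * vecMulVec (φ x) (star (φ x))).trace).re) θ₀
        = lam x * ((ρ θ₀ * vecMulVec (φ x) (star (φ x))).trace).re) ∧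
    ∑ x ∈ Finset.univ.filter
        (fun x => 0 < ((ρ θ₀ * vecMulVec (φ x) (star (φ x))).trace).re),
        (deriv (fun θ => ((ρ θ * vecMulVec (φ x) (star (φ x))).trace).re) θ₀) ^ 2
          / ((ρ θ₀ * vecMulVec (φ x) (star (φ x))).trace).re
      = ((ρ θ₀ * D * D).trace).re :=
  sld_eigenbasis_measurement_saturates_qcrb_general θ₀ ρ hρ ρ' hderiv D hD hSLD φ lam horth heig
end

section
/- Let d ≥ 1, let ρ be a positive definite d×d complex density matrix with orthonormal eigenbasis (v_i)_{i ∈ Fin d} and eigenvalues (p_i) (so all p_i > 0 and Σ p_i = 1), and let G be a Hermitian d×d matrix. Define the matrix D := 2i · Σ_{i,j} ((p_i − p_j)/(p_i + p_j)) · ⟨v_i, G v_j⟩ · v_i v_j†. Then: (a) D is Hermitian; (b) D solves the symmetric logarithmic derivative equation for the unitary family, i.e. −i(Gρ − ρG) = (ρD + Dρ)/2; and (c) the quantum Fisher information equals Re Tr(ρ·D·D) = 2 Σ_{i,j} ((p_i − p_j)²/(p_i + p_j)) · |⟨v_i, G v_j⟩|². -/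
open Matrix
open scoped ComplexOrder

/-!
In the orthonormal eigenbasis `(v i)` of `ρ` everything is entrywise. Conjugation by the unitary
`U` with columns `v i` is a trace-preserving ⋆-algebra automorphism carrying `diagonal p`,
`A = U† G U` and the matrix with entries `2i (p i - p j) / (p i + p j) A i j` to `ρ`, `G` and `D`.
There `(ρ D + D ρ) i j = (p i + p j) D i j = 2i (p i - p j) A i j` is the SLD equation, and
`Tr (ρ D D) = ∑ i j, p i |D i j|²`; symmetrising in `i, j` turns `p i` into `(p i + p j) / 2`.
-/

theorem neg_sub_div_add_swap {K : Type*} [Field K] (a b : K) :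
    (b - a) / (b + a) = -((a - b) / (a + b)) := by
  rw [add_comm b, ← neg_sub a, neg_div]

theorem mul_div_sq_eq_sq_div {K : Type*} [Field K] (a b : K) : b * (a / b) ^ 2 = a ^ 2 / b := by
  rcases eq_or_ne b 0 with rfl | hb
  · simp
  · field_simp

theorem Finset.sum_sum_add_mul_eq_two_mul {ι R : Type*} [Fintype ι] [CommSemiring R]
    (p : ι → R) {f : ι → ι → R} (hf : ∀ i j, f j i = f i j) :
    ∑ i, ∑ j, (p i + p j) * f i j = 2 * ∑ i, ∑ j, p i * f i j := by
  simp only [add_mul, Finset.sum_add_distrib]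
  rw [Finset.sum_comm (f := fun i j => p j * f i j)]
  simp only [hf]
  ring

namespace Matrix

section Basis

variable {ι m R : Type*}

theorem sum_sum_smul_vecMulVec_star [Fintype ι] [CommSemiring R] [StarRing R] (v : ι → m → R)
    (M : Matrix ι ι R) :
    ∑ i, ∑ j, M i j • vecMulVec (v i) (star (v j)) = (of v)ᵀ * M * (of v)ᵀᴴ := by
  ext k l
  simp only [sum_apply, smul_apply, vecMulVec_apply, mul_apply, transpose_apply, of_apply,
    conjTranspose_apply, Pi.star_apply, smul_eq_mul, Finset.sum_mul]
  rw [Finset.sum_comm]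
  exact Finset.sum_congr rfl fun i _ => Finset.sum_congr rfl fun j _ => by ring

theorem conjTranspose_mul_mul_transpose_of_apply [Fintype m] [CommSemiring R] [StarRing R]
    (A : Matrix m m R) (v : ι → m → R) (i j : ι) :
    ((of v)ᵀᴴ * A * (of v)ᵀ) i j = star (v i) ⬝ᵥ (A *ᵥ v j) := by
  rw [Matrix.mul_assoc]
  rfl

theorem mul_transpose_of_eq_mul_diagonal [Fintype m] [Fintype ι] [DecidableEq ι] [CommSemiring R]
    (A : Matrix m m R) (v : ι → m → R) (p : ι → R) (heig : ∀ i, A *ᵥ v i = p i • v i) :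
    A * (of v)ᵀ = (of v)ᵀ * diagonal p := by
  ext k i
  rw [mul_diagonal]
  exact (congrFun (heig i) k).trans (mul_comm _ _)

theorem transpose_of_mem_unitaryGroup [Fintype ι] [DecidableEq ι] [CommRing R] [StarRing R]
    (v : ι → ι → R) (horth : ∀ i j, star (v i) ⬝ᵥ v j = if i = j then 1 else 0) :
    (of v)ᵀ ∈ unitaryGroup ι R := by
  rw [mem_unitaryGroup_iff']
  ext i j
  simpa [mul_apply, one_apply, dotProduct] using horth i j

theorem trace_mul_mul_star_of_mem_unitaryGroup [Fintype ι] [DecidableEq ι] [CommRing R] [StarRing R]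
    {U : Matrix ι ι R} (hU : U ∈ unitaryGroup ι R) (X : Matrix ι ι R) :
    trace (U * X * star U) = trace X := by
  rw [trace_mul_cycle, mem_unitaryGroup_iff'.mp hU, Matrix.one_mul]

end Basis

section Eigenbasis

open Complex

variable {ι : Type*}

/-- The symmetric logarithmic derivative of `θ ↦ exp(-iθA) ρ exp(iθA)` at `θ = 0`
when `ρ = diagonal p`. -/
noncomputable def unitarySLD (p : ι → ℝ) (A : Matrix ι ι ℂ) : Matrix ι ι ℂ :=
  of fun i j => 2 * I * (((p i - p j) / (p i + p j) : ℝ) : ℂ) * A i j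

variable (p : ι → ℝ) {A : Matrix ι ι ℂ}

theorem isHermitian_unitarySLD (hA : A.IsHermitian) : (unitarySLD p A).IsHermitian := by
  ext i j
  simp only [unitarySLD, conjTranspose_apply, of_apply, star_mul', ← hA.apply i j]
  simp only [star_ofNat, Complex.star_def, conj_I, conj_ofReal]
  rw [neg_sub_div_add_swap (p i)]
  push_cast
  ring

theorem norm_unitarySLD_apply_sq (i j : ι) :
    ‖unitarySLD p A i j‖ ^ 2 = 4 * ((p i - p j) / (p i + p j)) ^ 2 * ‖A i j‖ ^ 2 := by
  simp only [unitarySLD, of_apply, norm_mul, norm_real, norm_I, Complex.norm_two,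
    Real.norm_eq_abs]
  rw [mul_pow, mul_pow, mul_pow, sq_abs]
  norm_num

variable [Fintype ι] [DecidableEq ι]

theorem unitarySLD_solves_sld_equation (hp : ∀ i j, p i + p j ≠ 0) :
    -I • (A * diagonal (fun i => (p i : ℂ)) - diagonal (fun i => (p i : ℂ)) * A) =
      (1 / 2 : ℂ) • (diagonal (fun i => (p i : ℂ)) * unitarySLD p A
        + unitarySLD p A * diagonal (fun i => (p i : ℂ))) := by
  ext i j
  have hij : (p i : ℂ) + p j ≠ 0 := by exact_mod_cast hp i j
  simp only [smul_apply, sub_apply, add_apply, diagonal_mul, mul_diagonal, unitarySLD, of_apply,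
    smul_eq_mul]
  push_cast
  field_simp
  ring

theorem trace_diagonal_mul_mul_self {H : Matrix ι ι ℂ} (hH : H.IsHermitian) :
    trace (diagonal (fun i => (p i : ℂ)) * H * H) = ((∑ i, ∑ j, p i * ‖H i j‖ ^ 2 : ℝ) : ℂ) := by
  rw [Matrix.mul_assoc]
  simp only [trace, diag, diagonal_mul]
  simp only [mul_apply, Finset.mul_sum]
  push_cast
  refine Finset.sum_congr rfl fun i _ => Finset.sum_congr rfl fun j _ => ?_
  rw [← hH.apply j i, Complex.star_def, mul_conj']

theorem re_trace_diagonal_mul_unitarySLD_mul_self (hA : A.IsHermitian) :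
    (trace (diagonal (fun i => (p i : ℂ)) * unitarySLD p A * unitarySLD p A)).re =
      2 * ∑ i, ∑ j, (p i - p j) ^ 2 / (p i + p j) * ‖A i j‖ ^ 2 := by
  set f : ι → ι → ℝ := fun i j => ((p i - p j) / (p i + p j)) ^ 2 * ‖A i j‖ ^ 2
  have hf : ∀ i j, f j i = f i j := by
    intro i j
    simp only [f, ← hA.apply i j, norm_star, neg_sub_div_add_swap (p i), neg_sq]
  rw [trace_diagonal_mul_mul_self p (isHermitian_unitarySLD p hA), ofReal_re]
  calc ∑ i, ∑ j, p i * ‖unitarySLD p A i j‖ ^ 2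
      = 2 * (2 * ∑ i, ∑ j, p i * f i j) := by
        simp only [norm_unitarySLD_apply_sq, f, Finset.mul_sum]
        exact Finset.sum_congr rfl fun i _ => Finset.sum_congr rfl fun j _ => by ring
    _ = 2 * ∑ i, ∑ j, (p i - p j) ^ 2 / (p i + p j) * ‖A i j‖ ^ 2 := by
        rw [← Finset.sum_sum_add_mul_eq_two_mul p hf]
        simp only [f, ← mul_assoc, mul_div_sq_eq_sq_div]

end Eigenbasis

end Matrix

theorem sld_and_qfi_of_unitary_family_general
    {d : ℕ}
    (ρ G : Matrix (Fin d) (Fin d) ℂ)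
    (hG : G.IsHermitian)
    (v : Fin d → Fin d → ℂ) (p : Fin d → ℝ)
    (horth : ∀ i j, star (v i) ⬝ᵥ v j = if i = j then 1 else 0)
    (heig : ∀ i, ρ *ᵥ v i = (p i : ℂ) • v i)
    (hp : ∀ i, 0 < p i) :
    let D : Matrix (Fin d) (Fin d) ℂ :=
      (2 * Complex.I) • ∑ i, ∑ j,
        (((p i - p j) / (p i + p j) : ℝ) : ℂ) •
          (star (v i) ⬝ᵥ (G *ᵥ v j)) • vecMulVec (v i) (star (v j))
    D.IsHermitian ∧
      (-Complex.I) • (G * ρ - ρ * G) = (1 / 2 : ℂ) • (ρ * D + D * ρ) ∧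
      ((ρ * D * D).trace).re
        = 2 * ∑ i, ∑ j, (p i - p j) ^ 2 / (p i + p j) *
            ‖star (v i) ⬝ᵥ (G *ᵥ v j)‖ ^ 2 := by
  intro D
  have hU := transpose_of_mem_unitaryGroup v horth
  set φ := Unitary.conjStarAlgAut ℂ _ ⟨_, hU⟩
  set A := φ.symm G
  have hA : A.IsHermitian := (hG.isSelfAdjoint.map φ.symm).isHermitian
  have hA_apply : ∀ i j, A i j = star (v i) ⬝ᵥ (G *ᵥ v j) :=
    conjTranspose_mul_mul_transpose_of_apply G v
  have hρ_eq : ρ = φ (diagonal fun i => (p i : ℂ)) := by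
    rw [← φ.apply_symm_apply ρ]
    congr 1
    rw [Unitary.conjStarAlgAut_symm_apply, Matrix.mul_assoc,
      mul_transpose_of_eq_mul_diagonal ρ v _ heig, ← Matrix.mul_assoc,
      mem_unitaryGroup_iff'.mp hU, Matrix.one_mul]
  have hD_eq : D = φ (unitarySLD p A) := by
    change D = (of v)ᵀ * unitarySLD p A * (of v)ᵀᴴ
    rw [← sum_sum_smul_vecMulVec_star]
    simp only [D, Finset.smul_sum, smul_smul, unitarySLD, of_apply, hA_apply, mul_assoc]
  have hpp : ∀ i j, p i + p j ≠ 0 := fun i j => (add_pos (hp i) (hp j)).ne'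
  refine ⟨?_, ?_, ?_⟩
  · rw [hD_eq]
    exact ((isHermitian_unitarySLD p hA).isSelfAdjoint.map φ).isHermitian
  · rw [← φ.apply_symm_apply G, hρ_eq, hD_eq]
    simpa only [map_smul, map_sub, map_add, map_mul] using
      congrArg φ (unitarySLD_solves_sld_equation p hpp)
  · rw [hρ_eq, hD_eq, ← map_mul, ← map_mul, Unitary.conjStarAlgAut_apply,
      trace_mul_mul_star_of_mem_unitaryGroup hU, re_trace_diagonal_mul_unitarySLD_mul_self p hA]
    simp only [hA_apply]

/-- For a positive definite density matrix `ρ` with orthonormal eigenbasis `v`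
and eigenvalues `p`, and a Hermitian generator `G`, the matrix
`D = 2i Σ_{ij} ((p_i - p_j)/(p_i + p_j)) ⟨v_i, G v_j⟩ |v_i⟩⟨v_j|` is Hermitian,
solves the symmetric logarithmic derivative equation for the unitary family
`exp(-iθG) ρ exp(iθG)`, and the quantum Fisher information equals
`2 Σ_{ij} ((p_i - p_j)²/(p_i + p_j)) |⟨v_i, G v_j⟩|²`. -/
theorem sld_and_qfi_of_unitary_family
    {d : ℕ} (hd : 1 ≤ d)
    (ρ G : Matrix (Fin d) (Fin d) ℂ) (hρ : ρ.PosDef) (htr : ρ.trace = 1)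
    (hG : G.IsHermitian)
    (v : Fin d → Fin d → ℂ) (p : Fin d → ℝ)
    (horth : ∀ i j, star (v i) ⬝ᵥ v j = if i = j then 1 else 0)
    (heig : ∀ i, ρ *ᵥ v i = (p i : ℂ) • v i)
    (hp : ∀ i, 0 < p i) (hsum : ∑ i, p i = 1) :
    let D : Matrix (Fin d) (Fin d) ℂ :=
      (2 * Complex.I) • ∑ i, ∑ j,
        (((p i - p j) / (p i + p j) : ℝ) : ℂ) •
          (star (v i) ⬝ᵥ (G *ᵥ v j)) • vecMulVec (v i) (star (v j))
    D.IsHermitian ∧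
      (-Complex.I) • (G * ρ - ρ * G) = (1 / 2 : ℂ) • (ρ * D + D * ρ) ∧
      ((ρ * D * D).trace).re
        = 2 * ∑ i, ∑ j, (p i - p j) ^ 2 / (p i + p j) *
            ‖star (v i) ⬝ᵥ (G *ᵥ v j)‖ ^ 2 :=
  sld_and_qfi_of_unitary_family_general ρ G hG v p horth heig hp
end

section
/- Let d ≥ 1, let ρ be a d×d complex density matrix with orthonormal eigenbasis (v_i) and eigenvalues (p_i) (p_i ≥ 0, Σ p_i = 1), and let G be a Hermitian d×d matrix. Then the quantum Fisher information is bounded by four times the variance: 2 Σ_{i,j : p_i+p_j>0} ((p_i − p_j)²/(p_i + p_j)) |⟨v_i, G v_j⟩|² ≤ 4( Re Tr(ρ·G·G) − (Re Tr(ρ·G))² ). -/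
open Matrix
open scoped ComplexOrder

/-!
Write `m i j = ⟪v i, G v j⟫`; conjugating by the unitary whose columns are the `v i` makes
`m` Hermitian and diagonalises `ρ`, so `Tr(ρG) = ∑ pᵢ mᵢᵢ` and `Tr(ρG²) = ∑ᵢⱼ pᵢ |mᵢⱼ|²`.
Each Fisher term is at most `(pᵢ + pⱼ) |mᵢⱼ|²` and vanishes for `i = j`, which by the symmetry
of `|mᵢⱼ|²` bounds the Fisher information by `4 (∑ᵢⱼ pᵢ |mᵢⱼ|² - ∑ᵢ pᵢ mᵢᵢ²)`; Jensen's inequality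
`(∑ pᵢ mᵢᵢ)² ≤ ∑ pᵢ mᵢᵢ²` finishes the proof.
-/

section FisherSum

variable {ι : Type*} [Fintype ι] [DecidableEq ι]

lemma ite_sq_sub_div_add_mul_le {x y c : ℝ} (hx : 0 ≤ x) (hy : 0 ≤ y) (hc : 0 ≤ c) :
    (if 0 < x + y then (x - y) ^ 2 / (x + y) * c else 0) ≤ (x + y) * c := by
  split_ifs with hxy
  · gcongr
    rw [div_le_iff₀ hxy]
    nlinarith
  · positivity

lemma two_mul_sum_qfi_le {p g : ι → ℝ} {a : ι → ι → ℝ} (hp : ∀ i, 0 ≤ p i)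
    (hsum : ∑ i, p i = 1) (ha : ∀ i j, 0 ≤ a i j) (ha_symm : ∀ i j, a i j = a j i)
    (hg : ∀ i, g i ^ 2 ≤ a i i) :
    2 * ∑ i, ∑ j, (if 0 < p i + p j then (p i - p j) ^ 2 / (p i + p j) * a i j else 0)
      ≤ 4 * (∑ i, ∑ j, p i * a i j - (∑ i, p i * g i) ^ 2) := by
  have hterm : ∀ i j,
      (if 0 < p i + p j then (p i - p j) ^ 2 / (p i + p j) * a i j else 0)
        ≤ (p i + p j) * a i j - if i = j then 2 * (p i * a i i) else 0 := by
    intro i j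
    by_cases hij : i = j
    · subst hij; simp [two_mul, add_mul]
    · simpa [hij] using ite_sq_sub_div_add_mul_le (hp i) (hp j) (ha i j)
  have hsymm : ∑ i, ∑ j, p j * a i j = ∑ i, ∑ j, p i * a i j := by
    rw [Finset.sum_comm]
    simp_rw [ha_symm]
  calc 2 * ∑ i, ∑ j, (if 0 < p i + p j then (p i - p j) ^ 2 / (p i + p j) * a i j else 0)
      ≤ 2 * ∑ i, ∑ j, ((p i + p j) * a i j - if i = j then 2 * (p i * a i i) else 0) := by
        gcongr with i _ j _; exact hterm i j
    _ = 4 * (∑ i, ∑ j, p i * a i j - ∑ i, p i * a i i) := by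
        simp only [Finset.sum_sub_distrib, add_mul, Finset.sum_add_distrib, hsymm,
          Finset.sum_ite_eq, Finset.mem_univ, if_true, ← Finset.mul_sum]
        ring
    _ ≤ 4 * (∑ i, ∑ j, p i * a i j - (∑ i, p i * g i) ^ 2) := by
        gcongr
        calc (∑ i, p i * g i) ^ 2 ≤ ∑ i, p i * g i ^ 2 :=
              (even_two.convexOn_pow (𝕜 := ℝ)).map_sum_le (fun i _ => hp i) hsum (by simp)
          _ ≤ ∑ i, p i * a i i := by gcongr with i; exacts [hp i, hg i]

end FisherSum

section Eigenbasis

variable {n R : Type*} [Fintype n] [CommSemiring R]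

lemma mul_eq_mul_diagonal_of_mulVec_eq_smul [DecidableEq n] {ρ : Matrix n n R}
    {v : n → n → R} {μ : n → R} (heig : ∀ i, ρ *ᵥ v i = μ i • v i) :
    ρ * (of v)ᵀ = (of v)ᵀ * diagonal μ := by
  ext k i
  rw [mul_diagonal]
  simpa [mul_comm, mulVec, dotProduct, mul_apply] using congrFun (heig i) k

variable [StarRing R]

lemma conjTranspose_mul_mul_apply_eq_dotProduct (v : n → n → R) (A : Matrix n n R) (i j : n) :
    (((of v)ᵀ)ᴴ * A * (of v)ᵀ) i j = star (v i) ⬝ᵥ (A *ᵥ v j) := by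
  simp only [mul_apply, mulVec, dotProduct, Finset.sum_mul, Finset.mul_sum]
  rw [Finset.sum_comm]
  simp [mul_assoc]

lemma conjTranspose_mul_self_eq_one_of_orthonormal [DecidableEq n] {v : n → n → R}
    (horth : ∀ i j, star (v i) ⬝ᵥ v j = if i = j then 1 else 0) :
    ((of v)ᵀ)ᴴ * (of v)ᵀ = 1 := by
  ext i j
  simpa [mul_apply, dotProduct, one_apply] using horth i j

lemma trace_mul_diagonal_mul_conjTranspose_mul [DecidableEq n] (V A : Matrix n n R)
    (μ : n → R) :
    (V * diagonal μ * Vᴴ * A).trace = ∑ i, μ i * (Vᴴ * A * V) i i := by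
  rw [mul_assoc, mul_assoc, trace_mul_comm, mul_assoc]
  simp [trace]

end Eigenbasis

lemma Matrix.IsHermitian.mul_self_apply_self {n 𝕜 : Type*} [Fintype n] [RCLike 𝕜]
    {M : Matrix n n 𝕜} (hM : M.IsHermitian) (i : n) :
    (M * M) i i = ∑ j, (‖M i j‖ : 𝕜) ^ 2 := by
  simp only [mul_apply]
  refine Finset.sum_congr rfl fun j _ => ?_
  rw [← hM.apply j i, RCLike.star_def, RCLike.mul_conj]

theorem qfi_le_four_mul_variance_general
    {d : ℕ}
    (ρ G : Matrix (Fin d) (Fin d) ℂ)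
    (hG : G.IsHermitian)
    (v : Fin d → Fin d → ℂ) (p : Fin d → ℝ)
    (horth : ∀ i j, star (v i) ⬝ᵥ v j = if i = j then 1 else 0)
    (heig : ∀ i, ρ *ᵥ v i = (p i : ℂ) • v i)
    (hp : ∀ i, 0 ≤ p i) (hsum : ∑ i, p i = 1) :
    2 * ∑ i, ∑ j, (if 0 < p i + p j then
        (p i - p j) ^ 2 / (p i + p j) *
          ‖star (v i) ⬝ᵥ (G *ᵥ v j)‖ ^ 2 else 0)
      ≤ 4 * (((ρ * G * G).trace).re - (((ρ * G).trace).re) ^ 2) := by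
  set V : Matrix (Fin d) (Fin d) ℂ := (of v)ᵀ
  set M := Vᴴ * G * V
  have hVV : V * Vᴴ = 1 :=
    mul_eq_one_comm.mp (conjTranspose_mul_self_eq_one_of_orthonormal horth)
  have hρ : ρ = V * diagonal (fun i => (p i : ℂ)) * Vᴴ := by
    rw [← mul_eq_mul_diagonal_of_mulVec_eq_smul heig, mul_assoc, hVV, mul_one]
  have hM : M.IsHermitian := isHermitian_conjTranspose_mul_mul V hG
  have hMM : Vᴴ * (G * G) * V = M * M := by
    simp only [M, mul_assoc, ← mul_assoc V, hVV, one_mul]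
  have hmean : ((ρ * G).trace).re = ∑ i, p i * (M i i).re := by
    simp [hρ, trace_mul_diagonal_mul_conjTranspose_mul, M]
  have hsecond : ((ρ * G * G).trace).re = ∑ i, ∑ j, p i * ‖M i j‖ ^ 2 := by
    rw [hρ, mul_assoc _ G, trace_mul_diagonal_mul_conjTranspose_mul, hMM]
    simp [hM.mul_self_apply_self, Finset.mul_sum, ← Complex.ofReal_pow]
  have hentry : ∀ i j, star (v i) ⬝ᵥ (G *ᵥ v j) = M i j := fun i j =>
    (conjTranspose_mul_mul_apply_eq_dotProduct v G i j).symm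
  simp only [hentry, hmean, hsecond]
  exact two_mul_sum_qfi_le hp hsum (fun _ _ => by positivity)
    (fun i j => by rw [← hM.apply i j, norm_star])
    (fun i => sq_le_sq.mpr (by simpa using Complex.abs_re_le_norm (M i i)))

/-- The quantum Fisher information of a density matrix `ρ` (with orthonormal
eigenbasis `v` and eigenvalues `p`) for a unitary encoding with Hermitian
generator `G` is bounded by four times the variance of `G` in the state `ρ`:
`I_Q(ρ, G) ≤ 4(Tr(ρG²) - (Tr(ρG))²)`. -/
theorem qfi_le_four_mul_variance
    {d : ℕ} (hd : 1 ≤ d)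
    (ρ G : Matrix (Fin d) (Fin d) ℂ)
    (hρ : ρ.PosSemidef) (htr : ρ.trace = 1) (hG : G.IsHermitian)
    (v : Fin d → Fin d → ℂ) (p : Fin d → ℝ)
    (horth : ∀ i j, star (v i) ⬝ᵥ v j = if i = j then 1 else 0)
    (heig : ∀ i, ρ *ᵥ v i = (p i : ℂ) • v i)
    (hp : ∀ i, 0 ≤ p i) (hsum : ∑ i, p i = 1) :
    2 * ∑ i, ∑ j, (if 0 < p i + p j then
        (p i - p j) ^ 2 / (p i + p j) *
          ‖star (v i) ⬝ᵥ (G *ᵥ v j)‖ ^ 2 else 0)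
      ≤ 4 * (((ρ * G * G).trace).re - (((ρ * G).trace).re) ^ 2) :=
  qfi_le_four_mul_variance_general ρ G hG v p horth heig hp hsum
end

section
/- Let d ≥ 1 and m ≥ 1, let ρ_1, …, ρ_m be positive definite d×d complex density matrices, q_1, …, q_m nonnegative reals with Σ q_k = 1 and each q_k > 0, and G a Hermitian d×d matrix. Set ρ := Σ_k q_k ρ_k (which is positive definite). Let D be the unique Hermitian solution of −i(Gρ − ρG) = (ρD + Dρ)/2 and, for each k, let D_k be the unique Hermitian solution of −i(Gρ_k − ρ_kG) = (ρ_kD_k + D_kρ_k)/2. Then the quantum Fisher information is convex: Re Tr(ρ·D·D) ≤ Σ_k q_k · Re Tr(ρ_k·D_k·D_k). -/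
/-!
Variational form of the quantum Fisher information: for `ρ ≥ 0` and Hermitian `D`, `X`,
`Re Tr((ρD + Dρ)X) - Re Tr(ρX²) = Re Tr(ρD²) - Re Tr(ρ(X - D)²) ≤ Re Tr(ρD²)`,
with equality at `X = D`. If `D` is the SLD of `ρ`, then `ρD + Dρ = -2i[G, ρ]` is linear in
`ρ`, so the left side at `X = D` is affine in `ρ`. Evaluating it for the mixture at its own
SLD and bounding each component's term by that component's Fisher information gives convexity.
-/

open Matrix
open scoped ComplexOrder

namespace Matrix

variable {n 𝕜 : Type*} [Fintype n] [RCLike 𝕜]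

theorem PosSemidef.re_trace_mul_mul_self_nonneg {ρ A : Matrix n n 𝕜} (hρ : ρ.PosSemidef)
    (hA : A.IsHermitian) : 0 ≤ RCLike.re (ρ * A * A).trace := by
  have hconj : (ρ * A * A).trace = (A * ρ * Aᴴ).trace := by
    rw [hA.eq, trace_mul_cycle]
  rw [hconj]
  exact (RCLike.nonneg_iff.mp (hρ.mul_mul_conjTranspose_same A).trace_nonneg).1

theorem PosSemidef.re_trace_anticomm_mul_sub_le {ρ D X : Matrix n n 𝕜} (hρ : ρ.PosSemidef)
    (hD : D.IsHermitian) (hX : X.IsHermitian) :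
    RCLike.re ((ρ * D + D * ρ) * X).trace - RCLike.re (ρ * X * X).trace
      ≤ RCLike.re (ρ * D * D).trace := by
  have hsq := hρ.re_trace_mul_mul_self_nonneg (hX.sub hD)
  have hexpand : (ρ * (X - D) * (X - D)).trace
      = (ρ * X * X).trace - ((ρ * D + D * ρ) * X).trace + (ρ * D * D).trace := by
    have hcycle : (D * ρ * X).trace = (ρ * X * D).trace := by
      rw [trace_mul_cycle, trace_mul_cycle]
    simp only [Matrix.mul_sub, Matrix.sub_mul, Matrix.add_mul, trace_sub, trace_add, hcycle]
    ring
  rw [hexpand, map_add, map_sub] at hsq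
  linarith

theorem trace_anticomm_mul_self (ρ D : Matrix n n 𝕜) :
    ((ρ * D + D * ρ) * D).trace = 2 * (ρ * D * D).trace := by
  rw [Matrix.add_mul, trace_add, Matrix.mul_assoc D, trace_mul_comm D, two_mul]

theorem re_trace_sum_smul_mul {ι : Type*} (s : Finset ι) (q : ι → ℝ)
    (M : ι → Matrix n n 𝕜) (X : Matrix n n 𝕜) :
    RCLike.re ((∑ k ∈ s, q k • M k) * X).trace
      = ∑ k ∈ s, q k * RCLike.re (M k * X).trace := by
  simp only [Finset.sum_mul, trace_sum, smul_mul_assoc, trace_smul, map_sum,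
    RCLike.smul_re]

end Matrix

theorem commutator_sum_smul {A R ι : Type*} [CommSemiring R] [Ring A] [Algebra R A] (G : A)
    (s : Finset ι) (c : ι → R) (ρ : ι → A) :
    G * (∑ k ∈ s, c k • ρ k) - (∑ k ∈ s, c k • ρ k) * G
      = ∑ k ∈ s, c k • (G * ρ k - ρ k * G) := by
  simp only [Finset.mul_sum, Finset.sum_mul, mul_smul_comm, smul_mul_assoc, smul_sub,
    Finset.sum_sub_distrib]

theorem qfi_convex_general
    {d m : ℕ}
    (ρs : Fin m → Matrix (Fin d) (Fin d) ℂ) (q : Fin m → ℝ)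
    (hρs : ∀ k, (ρs k).PosDef ∧ (ρs k).trace = 1)
    (hq : ∀ k, 0 < q k)
    (G : Matrix (Fin d) (Fin d) ℂ)
    (D : Matrix (Fin d) (Fin d) ℂ) (hD : D.IsHermitian)
    (Ds : Fin m → Matrix (Fin d) (Fin d) ℂ) (hDs : ∀ k, (Ds k).IsHermitian)
    (hSLD : (-Complex.I) • (G * (∑ k, (q k : ℂ) • ρs k)
          - (∑ k, (q k : ℂ) • ρs k) * G)
        = (1 / 2 : ℂ) • ((∑ k, (q k : ℂ) • ρs k) * D
          + D * (∑ k, (q k : ℂ) • ρs k)))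
    (hSLDs : ∀ k, (-Complex.I) • (G * ρs k - ρs k * G)
        = (1 / 2 : ℂ) • (ρs k * Ds k + Ds k * ρs k)) :
    (((∑ k, (q k : ℂ) • ρs k) * D * D).trace).re
      ≤ ∑ k, q k * ((ρs k * Ds k * Ds k).trace).re := by
  simp only [Complex.coe_smul] at hSLD ⊢
  have hmix : (∑ k, q k • ρs k) * D + D * ∑ k, q k • ρs k
      = ∑ k, q k • (ρs k * Ds k + Ds k * ρs k) := by
    refine smul_right_injective _ (by norm_num : (1 / 2 : ℂ) ≠ 0) ?_
    simp only [← hSLD, commutator_sum_smul, Finset.smul_sum, smul_comm _ (q _), hSLDs]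
  set ρ := ∑ k, q k • ρs k with hρ
  simp only [← RCLike.re_to_complex]
  calc RCLike.re (ρ * D * D).trace
      = RCLike.re ((ρ * D + D * ρ) * D).trace - RCLike.re (ρ * D * D).trace := by
        rw [trace_anticomm_mul_self, RCLike.ofNat_mul_re]; ring
    _ = ∑ k, q k * (RCLike.re ((ρs k * Ds k + Ds k * ρs k) * D).trace
          - RCLike.re (ρs k * D * D).trace) := by
        rw [hmix, Matrix.mul_assoc ρ, hρ, re_trace_sum_smul_mul, re_trace_sum_smul_mul,
          ← Finset.sum_sub_distrib]
        simp only [Matrix.mul_assoc, mul_sub]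
    _ ≤ ∑ k, q k * RCLike.re (ρs k * Ds k * Ds k).trace :=
        Finset.sum_le_sum fun k _ => mul_le_mul_of_nonneg_left
          ((hρs k).1.posSemidef.re_trace_anticomm_mul_sub_le (hDs k) hD) (hq k).le

/-- Convexity of the quantum Fisher information: for a mixture
`ρ = Σ_k q_k ρ_k` of positive definite density matrices, with `D` (resp. `D_k`)
the Hermitian symmetric logarithmic derivative of `ρ` (resp. `ρ_k`) for the
unitary encoding generated by the Hermitian `G`, one has
`Tr(ρ D²) ≤ Σ_k q_k Tr(ρ_k D_k²)`. -/
theorem qfi_convex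
    {d m : ℕ} (hd : 1 ≤ d) (hm : 1 ≤ m)
    (ρs : Fin m → Matrix (Fin d) (Fin d) ℂ) (q : Fin m → ℝ)
    (hρs : ∀ k, (ρs k).PosDef ∧ (ρs k).trace = 1)
    (hq : ∀ k, 0 < q k) (hqsum : ∑ k, q k = 1)
    (G : Matrix (Fin d) (Fin d) ℂ) (hG : G.IsHermitian)
    (D : Matrix (Fin d) (Fin d) ℂ) (hD : D.IsHermitian)
    (Ds : Fin m → Matrix (Fin d) (Fin d) ℂ) (hDs : ∀ k, (Ds k).IsHermitian)
    (hSLD : (-Complex.I) • (G * (∑ k, (q k : ℂ) • ρs k)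
          - (∑ k, (q k : ℂ) • ρs k) * G)
        = (1 / 2 : ℂ) • ((∑ k, (q k : ℂ) • ρs k) * D
          + D * (∑ k, (q k : ℂ) • ρs k)))
    (hSLDs : ∀ k, (-Complex.I) • (G * ρs k - ρs k * G)
        = (1 / 2 : ℂ) • (ρs k * Ds k + Ds k * ρs k)) :
    (((∑ k, (q k : ℂ) • ρs k) * D * D).trace).re
      ≤ ∑ k, q k * ((ρs k * Ds k * Ds k).trace).re :=
  qfi_convex_general ρs q hρs hq G D hD Ds hDs hSLD hSLDs
end

section
/- Let d₁, d₂ ≥ 1, let ρ be a positive definite d₁×d₁ complex density matrix and σ a positive definite d₂×d₂ complex density matrix, and let G (d₁×d₁) and H (d₂×d₂) be Hermitian. Let D_ρ be the unique Hermitian solution of −i(Gρ − ρG) = (ρD_ρ + D_ρρ)/2 and D_σ the unique Hermitian solution of −i(Hσ − σH) = (σD_σ + D_σσ)/2. Then: (a) D := D_ρ ⊗ 1 + 1 ⊗ D_σ (Kronecker products with identities) is the unique Hermitian solution of the symmetric logarithmic derivative equation for the state ρ ⊗ σ with generator G ⊗ 1 + 1 ⊗ H; and (b) the quantum Fisher information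 is additive: Re Tr((ρ⊗σ)·D·D) = Re Tr(ρ·D_ρ·D_ρ) + Re Tr(σ·D_σ·D_σ). -/
open Matrix
open scoped ComplexOrder Kronecker

/-!
The symmetric-logarithmic-derivative equation is linear in the generator and in the derivative,
and the Kronecker product is bilinear, so `Dρ ⊗ 1 + 1 ⊗ Dσ` solves the equation for `ρ ⊗ σ`.
It is the only solution because `X ↦ PX + XP` is injective for positive definite `P`:
`tr(XᴴPX) + tr(XPXᴴ) = tr(Xᴴ(PX + XP))`, and both traces are nonnegative.
Expanding `(ρ ⊗ σ) D²` gives additivity, the cross terms carrying the factor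
`tr(ρ Dρ) tr(σ Dσ)`, which vanishes by taking the trace of the equation.
-/

namespace Matrix

section PosDef

variable {n 𝕜 : Type*} [Fintype n] [RCLike 𝕜]

theorem PosDef.eq_zero_of_trace_mul_mul_conjTranspose_eq_zero {P X : Matrix n n 𝕜}
    (hP : P.PosDef) (hX : (X * P * Xᴴ).trace = 0) : X = 0 := by
  have h0 : X * P * Xᴴ = 0 := (hP.posSemidef.mul_mul_conjTranspose_same X).trace_eq_zero_iff.mp hX
  rw [← conjTranspose_eq_zero]
  refine mulVec_injective (funext fun v => ?_)
  rw [zero_mulVec]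
  by_contra hv
  have := hP.dotProduct_mulVec_pos hv
  rw [star_mulVec, conjTranspose_conjTranspose, dotProduct_mulVec, vecMul_vecMul,
    ← dotProduct_mulVec, mulVec_mulVec, h0] at this
  simp at this

theorem PosDef.eq_zero_of_mul_add_mul_eq_zero {P X : Matrix n n 𝕜}
    (hP : P.PosDef) (h : P * X + X * P = 0) : X = 0 := by
  have hsum : (Xᴴ * P * X).trace + (X * P * Xᴴ).trace = 0 := by
    rw [trace_mul_cycle X P Xᴴ, ← trace_add, mul_assoc, mul_assoc, ← mul_add, h, mul_zero,
      trace_zero]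
  have h₁ := (hP.posSemidef.conjTranspose_mul_mul_same X).trace_nonneg
  have h₂ := (hP.posSemidef.mul_mul_conjTranspose_same X).trace_nonneg
  exact hP.eq_zero_of_trace_mul_mul_conjTranspose_eq_zero
    ((add_eq_zero_iff_of_nonneg h₁ h₂).mp hsum).2

end PosDef

section Kronecker

variable {l m n p α : Type*}

theorem sub_kronecker [NonUnitalNonAssocRing α] (A₁ A₂ : Matrix l m α) (B : Matrix n p α) :
    (A₁ - A₂) ⊗ₖ B = A₁ ⊗ₖ B - A₂ ⊗ₖ B := by
  ext; simp [sub_mul]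

theorem kronecker_sub [NonUnitalNonAssocRing α] (A : Matrix l m α) (B₁ B₂ : Matrix n p α) :
    A ⊗ₖ (B₁ - B₂) = A ⊗ₖ B₁ - A ⊗ₖ B₂ := by
  ext; simp [mul_sub]

theorem IsHermitian.kronecker [CommSemiring α] [StarRing α] {A : Matrix m m α}
    {B : Matrix n n α} (hA : A.IsHermitian) (hB : B.IsHermitian) : (A ⊗ₖ B).IsHermitian := by
  rw [IsHermitian, conjTranspose_kronecker, hA.eq, hB.eq]

theorem trace_kronecker_mul_add_kronecker_sq [CommRing α] [Fintype m] [Fintype n]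
    [DecidableEq m] [DecidableEq n] (ρ A : Matrix m m α) (σ B : Matrix n n α) :
    ((ρ ⊗ₖ σ) * (A ⊗ₖ 1 + 1 ⊗ₖ B) * (A ⊗ₖ 1 + 1 ⊗ₖ B)).trace
      = (ρ * A * A).trace * σ.trace + 2 * (ρ * A).trace * (σ * B).trace
        + ρ.trace * (σ * B * B).trace := by
  simp only [add_mul, mul_add, ← mul_kronecker_mul, mul_one, trace_add, trace_kronecker]
  ring

end Kronecker

end Matrix

section SymmLogDeriv

variable {n : Type*} [Fintype n]

def IsSymmLogDeriv (ρ K D : Matrix n n ℂ) : Prop :=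
  (-Complex.I) • (K * ρ - ρ * K) = (1 / 2 : ℂ) • (ρ * D + D * ρ)

namespace IsSymmLogDeriv

theorem trace_mul_eq_zero {ρ K D : Matrix n n ℂ} (h : IsSymmLogDeriv ρ K D) :
    (ρ * D).trace = 0 := by
  have h := congrArg trace h
  rw [trace_smul, trace_smul, trace_sub, trace_add, trace_mul_comm K ρ, trace_mul_comm D ρ,
    sub_self, smul_zero, smul_eq_mul] at h
  linear_combination -h

theorem unique {ρ K D D' : Matrix n n ℂ} (hρ : ρ.PosDef) (h : IsSymmLogDeriv ρ K D)
    (h' : IsSymmLogDeriv ρ K D') : D' = D := by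
  have hsum : ρ * D' + D' * ρ = ρ * D + D * ρ :=
    smul_right_injective _ (one_div_ne_zero two_ne_zero) (h'.symm.trans h)
  refine sub_eq_zero.mp (hρ.eq_zero_of_mul_add_mul_eq_zero ?_)
  rw [mul_sub, sub_mul, sub_add_sub_comm, hsum, sub_self]

theorem kronecker {m : Type*} [Fintype m] [DecidableEq n] [DecidableEq m]
    {ρ G Dρ : Matrix n n ℂ} {σ H Dσ : Matrix m m ℂ}
    (hρ : IsSymmLogDeriv ρ G Dρ) (hσ : IsSymmLogDeriv σ H Dσ) :
    IsSymmLogDeriv (ρ ⊗ₖ σ) (G ⊗ₖ 1 + 1 ⊗ₖ H) (Dρ ⊗ₖ 1 + 1 ⊗ₖ Dσ) := by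
  unfold IsSymmLogDeriv at *
  calc (-Complex.I) • ((G ⊗ₖ 1 + 1 ⊗ₖ H) * (ρ ⊗ₖ σ) - (ρ ⊗ₖ σ) * (G ⊗ₖ 1 + 1 ⊗ₖ H))
      = ((-Complex.I) • (G * ρ - ρ * G)) ⊗ₖ σ + ρ ⊗ₖ ((-Complex.I) • (H * σ - σ * H)) := by
        simp only [add_mul, mul_add, ← mul_kronecker_mul, one_mul, mul_one, smul_kronecker,
          kronecker_smul, sub_kronecker, kronecker_sub]
        module
    _ = ((1 / 2 : ℂ) • (ρ * Dρ + Dρ * ρ)) ⊗ₖ σ + ρ ⊗ₖ ((1 / 2 : ℂ) • (σ * Dσ + Dσ * σ)) := by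
        rw [hρ, hσ]
    _ = (1 / 2 : ℂ) • ((ρ ⊗ₖ σ) * (Dρ ⊗ₖ 1 + 1 ⊗ₖ Dσ) + (Dρ ⊗ₖ 1 + 1 ⊗ₖ Dσ) * (ρ ⊗ₖ σ)) := by
        simp only [add_mul, mul_add, ← mul_kronecker_mul, one_mul, mul_one, smul_kronecker,
          kronecker_smul, add_kronecker, kronecker_add]
        module

end IsSymmLogDeriv

end SymmLogDeriv

theorem qfi_additive_for_tensor_products_general
    {d₁ d₂ : ℕ}
    (ρ : Matrix (Fin d₁) (Fin d₁) ℂ) (σ : Matrix (Fin d₂) (Fin d₂) ℂ)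
    (hρ : ρ.PosDef) (htrρ : ρ.trace = 1)
    (hσ : σ.PosDef) (htrσ : σ.trace = 1)
    (G : Matrix (Fin d₁) (Fin d₁) ℂ) (H : Matrix (Fin d₂) (Fin d₂) ℂ)
    (Dρ : Matrix (Fin d₁) (Fin d₁) ℂ) (hDρ : Dρ.IsHermitian)
    (hSLDρ : (-Complex.I) • (G * ρ - ρ * G) = (1 / 2 : ℂ) • (ρ * Dρ + Dρ * ρ))
    (Dσ : Matrix (Fin d₂) (Fin d₂) ℂ) (hDσ : Dσ.IsHermitian)
    (hSLDσ : (-Complex.I) • (H * σ - σ * H) = (1 / 2 : ℂ) • (σ * Dσ + Dσ * σ)) :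
    let K : Matrix (Fin d₁ × Fin d₂) (Fin d₁ × Fin d₂) ℂ :=
      G ⊗ₖ (1 : Matrix (Fin d₂) (Fin d₂) ℂ) + (1 : Matrix (Fin d₁) (Fin d₁) ℂ) ⊗ₖ H
    let D : Matrix (Fin d₁ × Fin d₂) (Fin d₁ × Fin d₂) ℂ :=
      Dρ ⊗ₖ (1 : Matrix (Fin d₂) (Fin d₂) ℂ) + (1 : Matrix (Fin d₁) (Fin d₁) ℂ) ⊗ₖ Dσ
    (D.IsHermitian ∧
      (-Complex.I) • (K * (ρ ⊗ₖ σ) - (ρ ⊗ₖ σ) * K)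
        = (1 / 2 : ℂ) • ((ρ ⊗ₖ σ) * D + D * (ρ ⊗ₖ σ)) ∧
      (∀ D' : Matrix (Fin d₁ × Fin d₂) (Fin d₁ × Fin d₂) ℂ, D'.IsHermitian →
        (-Complex.I) • (K * (ρ ⊗ₖ σ) - (ρ ⊗ₖ σ) * K)
          = (1 / 2 : ℂ) • ((ρ ⊗ₖ σ) * D' + D' * (ρ ⊗ₖ σ)) → D' = D)) ∧
    (((ρ ⊗ₖ σ) * D * D).trace).re
      = ((ρ * Dρ * Dρ).trace).re + ((σ * Dσ * Dσ).trace).re := by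
  intro K D
  have hD : IsSymmLogDeriv (ρ ⊗ₖ σ) K D := IsSymmLogDeriv.kronecker hSLDρ hSLDσ
  refine ⟨⟨(hDρ.kronecker isHermitian_one).add (isHermitian_one.kronecker hDσ), hD,
    fun D' _ hD' => hD.unique (hρ.kronecker hσ) hD'⟩, ?_⟩
  rw [trace_kronecker_mul_add_kronecker_sq, htrρ, htrσ,
    IsSymmLogDeriv.trace_mul_eq_zero hSLDρ, IsSymmLogDeriv.trace_mul_eq_zero hSLDσ]
  simp

/-- Additivity of the quantum Fisher information for product states: for
positive definite density matrices `ρ`, `σ`, Hermitian generators `G`, `H`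
with symmetric logarithmic derivatives `Dρ`, `Dσ`, the matrix
`D = Dρ ⊗ 1 + 1 ⊗ Dσ` is the unique Hermitian symmetric logarithmic derivative
of `ρ ⊗ σ` for the generator `G ⊗ 1 + 1 ⊗ H`, and
`Tr((ρ⊗σ) D²) = Tr(ρ Dρ²) + Tr(σ Dσ²)`. -/
theorem qfi_additive_for_tensor_products
    {d₁ d₂ : ℕ} (h₁ : 1 ≤ d₁) (h₂ : 1 ≤ d₂)
    (ρ : Matrix (Fin d₁) (Fin d₁) ℂ) (σ : Matrix (Fin d₂) (Fin d₂) ℂ)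
    (hρ : ρ.PosDef) (htrρ : ρ.trace = 1)
    (hσ : σ.PosDef) (htrσ : σ.trace = 1)
    (G : Matrix (Fin d₁) (Fin d₁) ℂ) (H : Matrix (Fin d₂) (Fin d₂) ℂ)
    (hG : G.IsHermitian) (hH : H.IsHermitian)
    (Dρ : Matrix (Fin d₁) (Fin d₁) ℂ) (hDρ : Dρ.IsHermitian)
    (hSLDρ : (-Complex.I) • (G * ρ - ρ * G) = (1 / 2 : ℂ) • (ρ * Dρ + Dρ * ρ))
    (Dσ : Matrix (Fin d₂) (Fin d₂) ℂ) (hDσ : Dσ.IsHermitian)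
    (hSLDσ : (-Complex.I) • (H * σ - σ * H) = (1 / 2 : ℂ) • (σ * Dσ + Dσ * σ)) :
    let K : Matrix (Fin d₁ × Fin d₂) (Fin d₁ × Fin d₂) ℂ :=
      G ⊗ₖ (1 : Matrix (Fin d₂) (Fin d₂) ℂ) + (1 : Matrix (Fin d₁) (Fin d₁) ℂ) ⊗ₖ H
    let D : Matrix (Fin d₁ × Fin d₂) (Fin d₁ × Fin d₂) ℂ :=
      Dρ ⊗ₖ (1 : Matrix (Fin d₂) (Fin d₂) ℂ) + (1 : Matrix (Fin d₁) (Fin d₁) ℂ) ⊗ₖ Dσ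
    (D.IsHermitian ∧
      (-Complex.I) • (K * (ρ ⊗ₖ σ) - (ρ ⊗ₖ σ) * K)
        = (1 / 2 : ℂ) • ((ρ ⊗ₖ σ) * D + D * (ρ ⊗ₖ σ)) ∧
      (∀ D' : Matrix (Fin d₁ × Fin d₂) (Fin d₁ × Fin d₂) ℂ, D'.IsHermitian →
        (-Complex.I) • (K * (ρ ⊗ₖ σ) - (ρ ⊗ₖ σ) * K)
          = (1 / 2 : ℂ) • ((ρ ⊗ₖ σ) * D' + D' * (ρ ⊗ₖ σ)) → D' = D)) ∧
    (((ρ ⊗ₖ σ) * D * D).trace).re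
      = ((ρ * Dρ * Dρ).trace).re + ((σ * Dσ * Dσ).trace).re :=
  qfi_additive_for_tensor_products_general ρ σ hρ htrρ hσ htrσ G H Dρ hDρ hSLDρ Dσ hDσ hSLDσ
end

section
/- Let β be a complex number, set b := |β|² and N := 2(1 + e^{−2b}), and define c : ℕ → ℂ by c(n) = 0 for odd n and c(2k) = 2 e^{−b/2} β^{2k} / (√((2k)!) · √N). Then: (a) Σ_{n=0}^∞ |c(n)|² = 1 (normalization of the even cat state); (b) the mean photon number is Σ_{n=0}^∞ n · |c(n)|² = b · tanh(b); and (c) the photon-number variance is Σ_{n=0}^∞ n² · |c(n)|² − (b·tanh b)² = b·tanh(b) + b² / cosh²(b). -/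
/-!
In the Fock basis the even cat state has photon-number distribution
`|c n|² = bⁿ / (n! cosh b)` on even `n` and `0` on odd `n`: it is the Poisson distribution of
rate `b` conditioned on an even count. Its moments are therefore the even parts
`(F(b) + F(-b)) / 2` of the exponential moments `F(x) = eˣ, x eˣ, (x + x²) eˣ`, namely
`cosh b`, `b sinh b` and `b sinh b + b² cosh b`; dividing by `cosh b` and using
`cosh² - sinh² = 1` gives the three claims.
-/

open Real Nat

theorem hasSum_ite_even_mul_pow {𝕜 : Type*} [Field 𝕜] [CharZero 𝕜] [TopologicalSpace 𝕜]
    [IsTopologicalRing 𝕜] {a : ℕ → 𝕜} {x A B : 𝕜}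
    (hA : HasSum (fun n ↦ a n * x ^ n) A) (hB : HasSum (fun n ↦ a n * (-x) ^ n) B) :
    HasSum (fun n ↦ if Even n then a n * x ^ n else 0) ((A + B) / 2) := by
  convert! (hA.add hB).div_const 2 using 2 with n
  rcases n.even_or_odd with hn | hn
  · rw [if_pos hn, hn.neg_pow]; ring
  · rw [if_neg (Nat.not_even_iff_odd.mpr hn), hn.neg_pow]; ring

theorem norm_sq_ofReal_mul_pow_div_sqrt_mul_sqrt (a : ℝ) (β : ℂ) (n : ℕ) {N : ℝ} (hN : 0 ≤ N) :
    ‖(a : ℂ) * β ^ n / ((√(n ! : ℝ) : ℂ) * (√N : ℂ))‖ ^ 2 = a ^ 2 * (‖β‖ ^ 2) ^ n / (n ! * N) := by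
  simp [div_pow, mul_pow, sq_sqrt hN, ← pow_mul, mul_comm]

namespace Real

theorem hasSum_pow_div_factorial (x : ℝ) : HasSum (fun n ↦ x ^ n / n !) (exp x) := by
  rw [exp_eq_exp_ℝ]
  exact NormedSpace.expSeries_div_hasSum_exp x

theorem hasSum_natCast_mul_pow_div_factorial (x : ℝ) :
    HasSum (fun n ↦ n * x ^ n / n !) (x * exp x) := by
  rw [← hasSum_nat_add_iff' 1]
  convert! (hasSum_pow_div_factorial x).mul_left x using 1
  · ext n
    rw [factorial_succ]
    push_cast
    field_simp
    ring
  · simp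

theorem hasSum_natCast_sq_mul_pow_div_factorial (x : ℝ) :
    HasSum (fun n ↦ n ^ 2 * x ^ n / n !) ((x + x ^ 2) * exp x) := by
  rw [← hasSum_nat_add_iff' 1]
  convert! ((hasSum_natCast_mul_pow_div_factorial x).add (hasSum_pow_div_factorial x)).mul_left x
    using 1
  · ext n
    rw [factorial_succ]
    push_cast
    field_simp
    ring
  · simp
    ring

theorem hasSum_ite_even_pow_div_factorial (x : ℝ) :
    HasSum (fun n ↦ if Even n then x ^ n / n ! else 0) (cosh x) := by
  have h := hasSum_ite_even_mul_pow (a := fun n ↦ (n ! : ℝ)⁻¹)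
    (by simpa only [inv_mul_eq_div] using hasSum_pow_div_factorial x)
    (by simpa only [inv_mul_eq_div] using hasSum_pow_div_factorial (-x))
  simpa only [inv_mul_eq_div, ← cosh_eq] using h

theorem hasSum_ite_even_natCast_mul_pow_div_factorial (x : ℝ) :
    HasSum (fun n ↦ if Even n then n * x ^ n / n ! else 0) (x * sinh x) := by
  have h := hasSum_ite_even_mul_pow (a := fun n ↦ (n / n ! : ℝ))
    (by simpa only [div_mul_eq_mul_div] using hasSum_natCast_mul_pow_div_factorial x)
    (by simpa only [div_mul_eq_mul_div] using hasSum_natCast_mul_pow_div_factorial (-x))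
  convert! h using 1
  · simp only [div_mul_eq_mul_div]
  · rw [sinh_eq]
    ring

theorem hasSum_ite_even_natCast_sq_mul_pow_div_factorial (x : ℝ) :
    HasSum (fun n ↦ if Even n then n ^ 2 * x ^ n / n ! else 0)
      (x * sinh x + x ^ 2 * cosh x) := by
  have h := hasSum_ite_even_mul_pow (a := fun n ↦ (n ^ 2 / n ! : ℝ))
    (by simpa only [div_mul_eq_mul_div] using hasSum_natCast_sq_mul_pow_div_factorial x)
    (by simpa only [div_mul_eq_mul_div] using hasSum_natCast_sq_mul_pow_div_factorial (-x))
  convert! h using 1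
  · simp only [div_mul_eq_mul_div]
  · rw [sinh_eq, cosh_eq]
    ring

theorem sq_two_mul_exp_neg_half_div_two_mul_one_add_exp_neg_two_mul (x : ℝ) :
    (2 * exp (-x / 2)) ^ 2 / (2 * (1 + exp (-2 * x))) = (cosh x)⁻¹ := by
  have h_sq : exp (-x / 2) ^ 2 = exp (-x) := by rw [← exp_nat_mul]; ring_nf
  have h_two_mul : exp (-2 * x) = exp (-x) * exp (-x) := by rw [← exp_add]; ring_nf
  have h_inv : exp x * exp (-x) = 1 := by rw [← exp_add]; simp
  rw [cosh_eq, mul_pow, h_sq, h_two_mul]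
  field_simp
  linear_combination h_inv

theorem add_sq_mul_cosh_div_cosh_sub_sq_mul_tanh (x : ℝ) :
    (x * sinh x + x ^ 2 * cosh x) / cosh x - (x * tanh x) ^ 2
      = x * tanh x + x ^ 2 / cosh x ^ 2 := by
  have := (cosh_pos x).ne'
  rw [tanh_eq_sinh_div_cosh]
  field_simp
  linear_combination x ^ 2 * cosh_sq_sub_sinh_sq x

end Real

/-- Photon-number statistics of the even cat state
`(|β⟩ + |−β⟩)/√N`, `N = 2(1 + e^{−2|β|²})`: the even Fock-basis amplitudes `c`
are normalized, the mean photon number is `b tanh b` with `b = |β|²`, and the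
photon-number variance is `b tanh b + b²/cosh² b`. -/
theorem even_cat_state_photon_number_moments
    (β : ℂ) (b N : ℝ)
    (hb : b = ‖β‖ ^ 2)
    (hN : N = 2 * (1 + Real.exp (-2 * b)))
    (c : ℕ → ℂ)
    (hodd : ∀ n, Odd n → c n = 0)
    (heven : ∀ k, c (2 * k) =
      ((2 * Real.exp (-b / 2) : ℝ) : ℂ) * β ^ (2 * k)
        / (((Real.sqrt (Nat.factorial (2 * k)) : ℝ) : ℂ) * ((Real.sqrt N : ℝ) : ℂ))) :
    (∑' n : ℕ, ‖c n‖ ^ 2 = 1) ∧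
    (∑' n : ℕ, (n : ℝ) * ‖c n‖ ^ 2 = b * Real.tanh b) ∧
    (∑' n : ℕ, (n : ℝ) ^ 2 * ‖c n‖ ^ 2 - (b * Real.tanh b) ^ 2
      = b * Real.tanh b + b ^ 2 / Real.cosh b ^ 2) := by
  have hweight (n : ℕ) : ‖c n‖ ^ 2 = (if Even n then b ^ n / n ! else 0) / cosh b := by
    rcases n.even_or_odd' with ⟨k, rfl | rfl⟩
    · rw [heven, norm_sq_ofReal_mul_pow_div_sqrt_mul_sqrt _ _ _ (by rw [hN]; positivity), ← hb,
        if_pos (even_two_mul k), div_eq_mul_inv _ (cosh b),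
        ← sq_two_mul_exp_neg_half_div_two_mul_one_add_exp_neg_two_mul, ← hN]
      ring
    · simp [hodd _ (odd_two_mul_add_one k)]
  have hnorm := (hasSum_ite_even_pow_div_factorial b).div_const (cosh b)
  have hmean := (hasSum_ite_even_natCast_mul_pow_div_factorial b).div_const (cosh b)
  have hsecond := (hasSum_ite_even_natCast_sq_mul_pow_div_factorial b).div_const (cosh b)
  simp only [hweight, mul_div_assoc', mul_ite, mul_zero]
  refine ⟨?_, ?_, ?_⟩
  · rw [hnorm.tsum_eq, div_self (cosh_pos b).ne']
  · rw [hmean.tsum_eq, mul_div_assoc, ← tanh_eq_sinh_div_cosh]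
  · rw [hsecond.tsum_eq, add_sq_mul_cosh_div_cosh_sub_sq_mul_tanh]
end
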